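/- arXiv:math/0203104 — 6 statements merged into one kernel-verified Lean document; each statement's English description precedes it below -/
import Mathlib

section
/- Let k ≥ 1, let ω : Fin k → ℝ be a weight vector, and let α : Fin k → ℕ be an exponent vector with Σ_{i=1}^k α_i ≥ 2. Then A_ω(α) = Σ_{i : α_i ≥ 1} A_ω(α − e_i), where e_i is the i-th standard basis exponent vector; explicitly, Nat.multinomial Finset.univ α · (Σ_{i=1}^k α_i·ω_i)/(Σ_{i=1}^k α_i) = Σ_{i : α_i ≥ 1} Nat.multinomial Finset.univ (α − e_i) · (Σ_{j=1}^k (α−e_i)_j·ω_j)/((Σ_{j=1}^k α_j) − 1). (This is the recursion on the differential lattice that characterizes the weight formula of Theorem 2.1.) -/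
open Nat in
lemma multinomial_update_key (k : ℕ) (α : Fin k → ℕ) (i : Fin k) (hi : 1 ≤ α i) :
    Nat.multinomial Finset.univ α * α i =
      Nat.multinomial Finset.univ (Function.update α i (α i - 1)) * ∑ j, α j := by
  set α' := Function.update α i (α i - 1) with hα'
  have hmem : i ∈ (Finset.univ : Finset (Fin k)) := Finset.mem_univ i
  have hS' : ∑ j, α' j = (∑ j, α j) - 1 := by
    rw [hα', Finset.sum_update_of_mem hmem, Finset.sdiff_singleton_eq_erase,
      ← Finset.sum_erase_add _ _ hmem]
    omega
  have hP : (∏ j, (α j)!) = α i * ∏ j, (α' j)! := by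
    have hcomp : ∀ j, (α' j)! = Function.update (fun j => (α j)!) i ((α i - 1)!) j := by
      intro j
      by_cases hj : j = i
      · subst hj; simp [hα']
      · simp [hα', Function.update_of_ne hj]
    rw [Finset.prod_congr rfl fun j _ => hcomp j, Finset.prod_update_of_mem hmem,
      Finset.sdiff_singleton_eq_erase, ← Finset.prod_erase_mul _ _ hmem]
    rw [show (α i)! = α i * (α i - 1)! by
      conv_lhs => rw [show α i = (α i - 1) + 1 by omega]
      rw [Nat.factorial_succ]; congr 2; omega]
    ring
  have hN : 1 ≤ ∑ j, α j := le_trans hi (Finset.single_le_sum (fun _ _ => Nat.zero_le _) hmem)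
  have h1 := Nat.multinomial_spec Finset.univ α
  have h2 := Nat.multinomial_spec Finset.univ α'
  have hpos : 0 < ∏ j, (α' j)! := Finset.prod_pos fun j _ => Nat.factorial_pos _
  apply Nat.eq_of_mul_eq_mul_left hpos
  calc (∏ j, (α' j)!) * (Nat.multinomial Finset.univ α * α i)
      = ((∏ j, (α j)!) * Nat.multinomial Finset.univ α) := by rw [hP]; ring
    _ = (∑ j, α j)! := h1
    _ = (∑ j, α j) * ((∑ j, α j) - 1)! := by
        conv_lhs => rw [show ∑ j, α j = ((∑ j, α j) - 1) + 1 by omega]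
        rw [Nat.factorial_succ]; congr 2; omega
    _ = (∑ j, α j) * ((∏ j, (α' j)!) * Nat.multinomial Finset.univ α') := by rw [h2, hS']
    _ = (∏ j, (α' j)!) * (Nat.multinomial Finset.univ α' * ∑ j, α j) := by ring

/-- The recursion on the differential lattice characterizing the weight formula of
Theorem 2.1: for `Σ α_i ≥ 2`,
`A_ω(α) = Σ_{i : α_i ≥ 1} A_ω(α − e_i)`, written out explicitly. -/
theorem weight_recursion (k : ℕ) (hk : 1 ≤ k) (ω : Fin k → ℝ) (α : Fin k → ℕ)
    (hα : 2 ≤ ∑ i, α i) :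
    (Nat.multinomial Finset.univ α : ℝ) * (∑ i, (α i : ℝ) * ω i) / (∑ i, (α i : ℝ)) =
      ∑ i ∈ Finset.univ.filter fun i => 1 ≤ α i,
        (Nat.multinomial Finset.univ (Function.update α i (α i - 1)) : ℝ) *
          (∑ j, ((Function.update α i (α i - 1)) j : ℝ) * ω j) /
            ((∑ j, (α j : ℝ)) - 1) := by
  set M : ℝ := (Nat.multinomial Finset.univ α : ℝ)
  set S : ℝ := ∑ i, (α i : ℝ) * ω i with hSdef
  set N : ℝ := ∑ j, (α j : ℝ) with hNdef
  have hN2 : (2 : ℝ) ≤ N := by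
    have : ((2 : ℕ) : ℝ) ≤ ((∑ i, α i : ℕ) : ℝ) := Nat.cast_le.mpr hα
    simpa [hNdef, Nat.cast_sum] using this
  have hN0 : N ≠ 0 := by linarith
  have hN1 : N - 1 ≠ 0 := by linarith
  have hterm : ∀ i ∈ Finset.univ.filter fun i => 1 ≤ α i,
      (Nat.multinomial Finset.univ (Function.update α i (α i - 1)) : ℝ) *
        (∑ j, ((Function.update α i (α i - 1)) j : ℝ) * ω j) / ((∑ j, (α j : ℝ)) - 1)
      = M * (α i : ℝ) * (S - ω i) / (N * (N - 1)) := by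
    intro i hi
    rw [Finset.mem_filter] at hi
    have hi1 : 1 ≤ α i := hi.2
    have hM' : (Nat.multinomial Finset.univ (Function.update α i (α i - 1)) : ℝ) * N
        = M * (α i : ℝ) := by
      have h := multinomial_update_key k α i hi1
      have hcast : M * (α i : ℝ)
          = (Nat.multinomial Finset.univ (Function.update α i (α i - 1)) : ℝ) * N := by
        have hc := congrArg (Nat.cast : ℕ → ℝ) h
        push_cast at hc
        rw [← hNdef] at hc
        exact hc
      linarith [hcast]
    have hmem : i ∈ (Finset.univ : Finset (Fin k)) := Finset.mem_univ i
    have hS' : (∑ j, ((Function.update α i (α i - 1)) j : ℝ) * ω j) = S - ω i := by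
      have hsplit : S = (∑ j ∈ Finset.univ.erase i, (α j : ℝ) * ω j) + (α i : ℝ) * ω i :=
        (Finset.sum_erase_add _ _ hmem).symm
      rw [← Finset.sum_erase_add _ _ hmem, Function.update_self, hsplit]
      rw [Finset.sum_congr rfl (fun j hj => by
        rw [Function.update_of_ne (Finset.ne_of_mem_erase hj)])]
      have hc : ((α i - 1 : ℕ) : ℝ) = (α i : ℝ) - 1 := by
        push_cast [Nat.cast_sub hi1]; ring
      rw [hc]; ring
    rw [hS']
    have hM'' : (Nat.multinomial Finset.univ (Function.update α i (α i - 1)) : ℝ)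
        = M * (α i : ℝ) / N := by
      field_simp
      linarith [hM']
    rw [hM'', div_mul_eq_mul_div, div_div]
  rw [Finset.sum_congr rfl hterm]
  have hsum : (∑ i ∈ Finset.univ.filter fun i => 1 ≤ α i, M * (α i : ℝ) * (S - ω i) / (N * (N - 1)))
      = M * S * (N - 1) / (N * (N - 1)) := by
    rw [← Finset.sum_div]
    congr 1
    rw [Finset.sum_filter]
    have hif : ∀ i, (if 1 ≤ α i then M * (α i : ℝ) * (S - ω i) else 0)
        = M * (α i : ℝ) * (S - ω i) := by
      intro i
      by_cases h : 1 ≤ α i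
      · rw [if_pos h]
      · rw [if_neg h]
        have : α i = 0 := by omega
        simp [this]
    rw [Finset.sum_congr rfl fun i _ => hif i]
    have hterm2 : ∀ i, M * (α i : ℝ) * (S - ω i)
        = M * S * (α i : ℝ) - M * ((α i : ℝ) * ω i) := fun i => by ring
    rw [Finset.sum_congr rfl fun i _ => hterm2 i, Finset.sum_sub_distrib,
      ← Finset.mul_sum, ← Finset.mul_sum, ← hNdef, ← hSdef]
    ring
  rw [hsum]
  field_simp
end

section
/- Let n ≥ 1 and k ≥ n. For 0 ≤ r ≤ n−1 let ω^{(r)} : Fin k → ℝ be the weight vector with ω^{(r)}_i = 0 for i ≤ r and ω^{(r)}_i = 1 for i > r, and let H_r = (−1)^r · P_{n,ω^{(r)}} (the isobaric reflect of the hook Schur polynomial of shape (n−r,1^r)). Then G_n = Σ_{r=0}^{n−1} (−1)^r H_r, i.e. G_n = Σ_{r=0}^{n−1} P_{n,ω^{(r)}}. -/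
open MvPolynomial Finset

/-- The weight coefficient `A_ω(α)` of Theorem 2.1 (for `α ≠ 0`):
`A_ω(α) = multinomial(α) · (Σ α_i ω_i) / (Σ α_i)`. -/
noncomputable def Aw {k : ℕ} (ω : Fin k → ℝ) (α : Fin k → ℕ) : ℝ :=
  (Nat.multinomial Finset.univ α : ℝ) * (∑ i, (α i : ℝ) * ω i) / (∑ i, (α i : ℝ))

/-- The isobaric degree `Σ_{i=1}^k i·α_i` of an exponent vector. -/
def isoDeg {k : ℕ} (α : Fin k → ℕ) : ℕ := ∑ i, (i.1 + 1) * α i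

/-- The (finite) set of exponent vectors of isobaric degree `n`. -/
def wipIndex (k n : ℕ) : Finset (Fin k → ℕ) :=
  (Fintype.piFinset fun _ : Fin k => Finset.range (n + 1)).filter fun α => isoDeg α = n

/-- The weighted isobaric polynomial `P_{n,ω} = Σ_α A_ω(α)·t^α`. -/
noncomputable def WIP (k n : ℕ) (ω : Fin k → ℝ) : MvPolynomial (Fin k) ℝ :=
  ∑ α ∈ wipIndex k n, MvPolynomial.monomial (Finsupp.equivFunOnFinite.symm α) (Aw ω α)

/-- The operator `T_m(P) = D₁₁P − Σ_j t_j D_{2j}P − m·D₂P`. -/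
noncomputable def Tm (k : ℕ) (hk : 2 ≤ k) (m : ℝ) (P : MvPolynomial (Fin k) ℝ) :
    MvPolynomial (Fin k) ℝ :=
  pderiv (⟨0, by omega⟩ : Fin k) (pderiv (⟨0, by omega⟩ : Fin k) P)
    - ∑ j : Fin k, X j * pderiv (⟨1, by omega⟩ : Fin k) (pderiv j P)
    - C m * pderiv (⟨1, by omega⟩ : Fin k) P

/-- The `j`-th element `γ^{(j)}` of the string generated by `γ`. -/
def strElem (k : ℕ) (hk : 2 ≤ k) (γ : Fin k → ℕ) (j : ℕ) : Fin k → ℕ :=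
  fun i => if i = (⟨0, by omega⟩ : Fin k) then γ i + 2 * j
    else if i = (⟨1, by omega⟩ : Fin k) then γ i - j else γ i

/-- The `ω`-weighted string generated by `γ`:
`S_ω(γ) = Σ_{j=0}^{γ₂} A_ω(γ^{(j)})·t^{γ^{(j)}}`. -/
noncomputable def strPoly (k : ℕ) (hk : 2 ≤ k) (ω : Fin k → ℝ) (γ : Fin k → ℕ) :
    MvPolynomial (Fin k) ℝ :=
  ∑ j ∈ Finset.range (γ (⟨1, by omega⟩ : Fin k) + 1),
    MvPolynomial.monomial (Finsupp.equivFunOnFinite.symm (strElem k hk γ j))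
      (Aw ω (strElem k hk γ j))

/-- The generalized Lucas polynomial `G_n = P_{n,ν}`, `ν_i = i`. -/
noncomputable def Gpoly (k n : ℕ) : MvPolynomial (Fin k) ℝ :=
  WIP k n (fun i => (i.1 + 1 : ℝ))

lemma hook_coeff_sum {k n : ℕ} (α : Fin k → ℕ) (h : isoDeg α = n) :
    Aw (fun i : Fin k => (i.1 + 1 : ℝ)) α =
      ∑ r ∈ Finset.range n, Aw (fun i : Fin k => if (i : ℕ) < r then 0 else 1) α := by
  unfold Aw
  simp_rw [div_eq_mul_inv]
  rw [← Finset.sum_mul, ← Finset.mul_sum]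
  congr 2
  rw [Finset.sum_comm]
  apply Finset.sum_congr rfl
  intro i _
  rw [← Finset.mul_sum]
  by_cases hz : α i = 0
  · simp [hz]
  · congr 1
    have hle : i.1 + 1 ≤ n := by
      have h1 : (i.1 + 1) * α i ≤ ∑ j, (j.1 + 1) * α j :=
        Finset.single_le_sum (f := fun j : Fin k => (j.1 + 1) * α j)
          (fun j _ => Nat.zero_le _) (Finset.mem_univ i)
      rw [isoDeg] at h
      have := Nat.le_mul_of_pos_right (i.1 + 1) (Nat.pos_of_ne_zero hz)
      omega
    have key : ∀ r : ℕ, (if (i : ℕ) < r then (0:ℝ) else 1)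
        = if r ∈ Finset.range (i.1 + 1) then (1:ℝ) else 0 := by
      intro r
      have hiff : (r ∈ Finset.range (i.1 + 1)) ↔ ¬ ((i : ℕ) < r) := by
        simp [Finset.mem_range]
      by_cases hr : (i : ℕ) < r <;> simp [hr, hiff]
    simp_rw [key]
    rw [Finset.sum_ite_mem]
    have : Finset.range n ∩ Finset.range (i.1 + 1) = Finset.range (i.1 + 1) :=
      Finset.inter_eq_right.mpr (Finset.range_subset_range.mpr hle)
    rw [this]
    simp

/-- `G_n = Σ_{r=0}^{n-1} (−1)^r H_r = Σ_{r=0}^{n-1} P_{n,ω^{(r)}}`, where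
`ω^{(r)}` is `0` in the first `r` components and `1` afterwards (the hook weight
vectors, up to sign). -/
theorem lucas_eq_sum_hooks (k n : ℕ) (hn : 1 ≤ n) (hk : n ≤ k) :
    Gpoly k n =
      ∑ r ∈ Finset.range n, WIP k n (fun i => if (i : ℕ) < r then 0 else 1) := by
  unfold Gpoly WIP
  rw [Finset.sum_comm]
  apply Finset.sum_congr rfl
  intro α hα
  have h : isoDeg α = n := (Finset.mem_filter.mp hα).2
  rw [← map_sum, hook_coeff_sum α h]
end

section
/- For every k ≥ 2 and every n ≥ 1, the generalized Fibonacci polynomial F_n lies in the kernel of T_2: (∂/∂t₁)²F_n − Σ_{j=1}^k t_j·(∂/∂t₂)(∂/∂t_j)F_n − 2·(∂/∂t₂)F_n = 0. -/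
open MvPolynomial Finset

/-- The generalized Fibonacci polynomial `F_n = Σ_α multinomial(α)·t^α`
(over exponent vectors of isobaric degree `n`); note `F_0 = 1`. -/
noncomputable def Fpoly (k n : ℕ) : MvPolynomial (Fin k) ℝ :=
  ∑ α ∈ wipIndex k n,
    MvPolynomial.monomial (Finsupp.equivFunOnFinite.symm α) (Nat.multinomial Finset.univ α : ℝ)

/-! Compare coefficients. The coefficient of `t^β` in `T_m P` is
`(β₁+1)(β₁+2)·[t^{β+2e₁}]P − (|β|+m)(β₂+1)·[t^{β+e₂}]P`, because `Σ_j t_j ∂_j` multiplies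
`t^β` by `|β| = Σ β_i`. For `P = F_n` both shifted exponents have isobaric degree
`isoDeg β + 2`, and for `m = 2` the two multinomial terms agree: each equals `(|β|+2)!/∏ β_i!`. -/

namespace MvPolynomial

variable {R σ : Type*} [CommSemiring R]

theorem pderiv_pderiv_comm (i j : σ) (p : MvPolynomial σ R) :
    pderiv i (pderiv j p) = pderiv j (pderiv i p) := by
  classical
  ext m
  simp only [coeff_pderiv, Finsupp.add_apply, Finsupp.single_apply, add_right_comm m]
  split_ifs <;> simp_all [mul_right_comm]

theorem coeff_X_mul_pderiv (j : σ) (p : MvPolynomial σ R) (m : σ →₀ ℕ) :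
    coeff m (X j * pderiv j p) = m j * coeff m p := by
  classical
  rw [coeff_X_mul']
  split_ifs with hj
  · have hmj : 1 ≤ m j := Nat.one_le_iff_ne_zero.mpr (Finsupp.mem_support_iff.mp hj)
    have hle : Finsupp.single j 1 ≤ m := Finsupp.single_le_iff.mpr hmj
    rw [coeff_pderiv, tsub_add_cancel_of_le hle, mul_comm, Finsupp.tsub_apply,
      Finsupp.single_eq_same]
    norm_cast
    rw [Nat.sub_add_cancel hmj]
  · simp [Finsupp.notMem_support_iff.mp hj]

theorem coeff_sum_X_mul_pderiv [Fintype σ] (p : MvPolynomial σ R) (m : σ →₀ ℕ) :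
    coeff m (∑ j, X j * pderiv j p) = (∑ j, (m j : R)) * coeff m p := by
  simp only [coeff_sum, coeff_X_mul_pderiv, Finset.sum_mul]

end MvPolynomial

namespace Nat

theorem succ_mul_multinomial_add_single {ι : Type*} [Fintype ι] [DecidableEq ι]
    (f : ι → ℕ) (i : ι) :
    (f i + 1) * multinomial univ (f + Pi.single i 1) = (∑ j, f j + 1) * multinomial univ f := by
  have hrest : ∀ g : ι → ℕ, multinomial univ g =
      (g i + ∑ j ∈ univ.erase i, g j).choose (g i) * multinomial (univ.erase i) g := by
    intro g
    rw [← multinomial_insert (notMem_erase i univ), insert_erase (mem_univ i)]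
  have hoff : ∀ j ∈ univ.erase i, (f + Pi.single i 1 : ι → ℕ) j = f j := fun j hj => by
    simp [Pi.single_eq_of_ne (ne_of_mem_erase hj)]
  rw [hrest, hrest f, multinomial_congr hoff, sum_congr rfl hoff,
    ← add_sum_erase univ f (mem_univ i)]
  simp only [Pi.add_apply, Pi.single_eq_same]
  rw [← mul_assoc, ← mul_assoc, add_one_mul_choose_eq, add_right_comm, mul_comm (f i + 1)]

theorem multinomial_add_single_two_eq {ι : Type*} [Fintype ι] [DecidableEq ι]
    (f : ι → ℕ) (i j : ι) :
    (f i + 1) * (f i + 2) * multinomial univ (f + Pi.single i 2)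
      = (∑ l, f l + 2) * (f j + 1) * multinomial univ (f + Pi.single j 1) := by
  have hi := succ_mul_multinomial_add_single f i
  have hi' := succ_mul_multinomial_add_single (f + Pi.single i 1) i
  have hj := succ_mul_multinomial_add_single f j
  rw [add_assoc, ← Pi.single_add] at hi'
  simp only [Pi.add_apply, Pi.single_eq_same, sum_add_distrib, sum_pi_single', mem_univ,
    if_true, add_assoc, one_add_one_eq_two] at hi'
  calc (f i + 1) * (f i + 2) * multinomial univ (f + Pi.single i 2)
      = (∑ l, f l + 2) * ((f i + 1) * multinomial univ (f + Pi.single i 1)) := by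
        rw [mul_assoc, hi']; ring
    _ = (∑ l, f l + 2) * (f j + 1) * multinomial univ (f + Pi.single j 1) := by
        rw [hi, ← hj]; ring

end Nat

theorem mem_wipIndex {k n : ℕ} {α : Fin k → ℕ} : α ∈ wipIndex k n ↔ isoDeg α = n := by
  simp only [wipIndex, mem_filter, Fintype.mem_piFinset, mem_range, and_iff_right_iff_imp]
  intro h i
  have : (i.1 + 1) * α i ≤ isoDeg α :=
    single_le_sum (f := fun j : Fin k => (j.1 + 1) * α j) (fun _ _ => Nat.zero_le _) (mem_univ i)
  nlinarith

theorem isoDeg_add_single {k : ℕ} (α : Fin k → ℕ) (i : Fin k) (m : ℕ) :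
    isoDeg (α + Pi.single i m) = isoDeg α + (i.1 + 1) * m := by
  simp [isoDeg, mul_add, sum_add_distrib, Pi.single_apply]

theorem coeff_Fpoly {k n : ℕ} (γ : Fin k →₀ ℕ) :
    coeff γ (Fpoly k n) = if isoDeg ⇑γ = n then (Nat.multinomial univ γ : ℝ) else 0 := by
  simp only [Fpoly, coeff_sum, coeff_monomial, Equiv.symm_apply_eq]
  rw [sum_ite_eq']
  simp only [mem_wipIndex]
  rfl

theorem coeff_Tm (k : ℕ) (hk : 2 ≤ k) (m : ℝ) (P : MvPolynomial (Fin k) ℝ) (β : Fin k →₀ ℕ) :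
    coeff β (Tm k hk m P) =
      ((β ⟨0, by omega⟩ : ℝ) + 1) * (β ⟨0, by omega⟩ + 2)
          * coeff (β + Finsupp.single ⟨0, by omega⟩ 2) P
        - ((∑ j, (β j : ℝ)) + m) * (β ⟨1, by omega⟩ + 1)
          * coeff (β + Finsupp.single ⟨1, by omega⟩ 1) P := by
  simp only [Tm, coeff_sub, coeff_C_mul, pderiv_pderiv_comm (⟨1, by omega⟩ : Fin k),
    coeff_sum_X_mul_pderiv, coeff_pderiv, add_assoc, ← Finsupp.single_add,
    one_add_one_eq_two, Finsupp.add_apply, Finsupp.single_eq_same]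
  push_cast
  ring

theorem fibonacci_in_ker_T2_general (k : ℕ) (hk : 2 ≤ k) (n : ℕ) :
    Tm k hk 2 (Fpoly k n) = 0 := by
  ext β
  rw [coeff_Tm, coeff_Fpoly, coeff_Fpoly, coeff_zero]
  simp only [Finsupp.coe_add, Finsupp.single_eq_pi_single, isoDeg_add_single]
  split_ifs
  · rw [sub_eq_zero]
    exact_mod_cast Nat.multinomial_add_single_two_eq (⇑β) _ _
  · simp

/-- For every `k ≥ 2` and `n ≥ 1`, the generalized Fibonacci polynomial `F_n`
lies in the kernel of `T_2`. -/
theorem fibonacci_in_ker_T2 (k : ℕ) (hk : 2 ≤ k) (n : ℕ) (hn : 1 ≤ n) :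
    Tm k hk 2 (Fpoly k n) = 0 :=
  fibonacci_in_ker_T2_general k hk n
end

section
/- Let k ≥ 2, let ν be the natural weight vector with ν_i = i for all i, and let γ : Fin k → ℕ be a string generator with γ₁ ∈ {0,1}. Then the ν-weighted string satisfies T_1(S_ν(γ)) = 0. (Every string belonging to a generalized Lucas polynomial G_n is annihilated by T_1.) -/
open MvPolynomial Finset

section Aux

variable {k : ℕ}

lemma sExp_apply (f : Fin k → ℕ) (a : Fin k) :
    (Finsupp.equivFunOnFinite.symm f) a = f a := rfl

lemma sum_split {M : Type*} [AddCommMonoid M] (i0 i1 : Fin k) (hne : i0 ≠ i1)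
    (f : Fin k → M) :
    ∑ i, f i = f i0 + (f i1 + ∑ i ∈ (univ.erase i0).erase i1, f i) := by
  rw [Finset.add_sum_erase _ f (by simp [hne.symm] : i1 ∈ univ.erase i0),
    Finset.add_sum_erase _ f (mem_univ i0)]

lemma prod_split {M : Type*} [CommMonoid M] (i0 i1 : Fin k) (hne : i0 ≠ i1)
    (f : Fin k → M) :
    ∏ i, f i = f i0 * (f i1 * ∏ i ∈ (univ.erase i0).erase i1, f i) := by
  rw [Finset.mul_prod_erase _ f (by simp [hne.symm] : i1 ∈ univ.erase i0),
    Finset.mul_prod_erase _ f (mem_univ i0)]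

/-- key per-term lemma -/
lemma X_mul_pderiv_pderiv_monomial (i1 j : Fin k) (c : ℝ) (s : Fin k →₀ ℕ) :
    X j * pderiv i1 (pderiv j (monomial s c)) =
      monomial (s - Finsupp.single i1 1)
        (c * (s j) * ((s - Finsupp.single j 1 : Fin k →₀ ℕ) i1)) := by
  rw [pderiv_monomial, pderiv_monomial]
  by_cases h : (s j) * ((s - Finsupp.single j 1 : Fin k →₀ ℕ) i1) = 0
  · rcases Nat.mul_eq_zero.1 h with h | h <;>
      simp [h, mul_assoc, ← Nat.cast_mul]
  · obtain ⟨h1, h2⟩ := Nat.mul_ne_zero_iff.mp h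
    rw [Finsupp.tsub_apply, Finsupp.single_apply] at h2
    have h1' : 1 ≤ s j := Nat.one_le_iff_ne_zero.mpr h1
    have : Finsupp.single j 1 + (s - Finsupp.single j 1 - Finsupp.single i1 1)
        = s - Finsupp.single i1 1 := by
      ext i
      simp only [Finsupp.add_apply, Finsupp.tsub_apply, Finsupp.single_apply]
      split_ifs at h2 ⊢ <;> first | omega | (simp_all; omega) | simp_all
    rw [← this, monomial_single_add]
    simp

lemma coeff_id (i1 : Fin k) (c : ℝ) (s : Fin k →₀ ℕ) :
    (∑ j, c * (s j : ℝ) * (((s - Finsupp.single j 1 : Fin k →₀ ℕ) i1 : ℕ) : ℝ))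
        + c * (s i1 : ℝ)
      = c * (s i1 : ℝ) * ∑ i, (s i : ℝ) := by
  have key : ∀ j ∈ univ.erase i1,
      c * (s j : ℝ) * (((s - Finsupp.single j 1 : Fin k →₀ ℕ) i1 : ℕ) : ℝ)
        = c * (s i1 : ℝ) * (s j : ℝ) := by
    intro j hj
    have hj' : j ≠ i1 := (Finset.mem_erase.mp hj).1
    rw [Finsupp.tsub_apply, Finsupp.single_apply, if_neg hj', Nat.sub_zero]
    ring
  rw [← Finset.add_sum_erase _ _ (mem_univ i1), Finset.sum_congr rfl key,
      ← Finset.add_sum_erase _ (fun i => (s i : ℝ)) (mem_univ i1),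
      ← Finset.mul_sum]
  rw [Finsupp.tsub_apply, Finsupp.single_apply, if_pos rfl]
  rcases Nat.eq_zero_or_pos (s i1) with h | h
  · simp [h]
  · rw [Nat.cast_sub h]
    push_cast
    ring

lemma Tm_sum (hk : 2 ≤ k) (m : ℝ) {ι : Type*} (t : Finset ι)
    (f : ι → MvPolynomial (Fin k) ℝ) :
    Tm k hk m (∑ a ∈ t, f a) = ∑ a ∈ t, Tm k hk m (f a) := by
  unfold Tm
  simp only [map_sum, Finset.mul_sum, Finset.sum_sub_distrib]
  congr 1
  congr 1
  exact Finset.sum_comm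

lemma Tm_monomial (hk : 2 ≤ k) (c : ℝ) (s : Fin k →₀ ℕ) :
    Tm k hk 1 (monomial s c) =
      monomial (s - Finsupp.single (⟨0, by omega⟩ : Fin k) 1
          - Finsupp.single (⟨0, by omega⟩ : Fin k) 1)
        (c * (s (⟨0, by omega⟩ : Fin k)) *
          ((s - Finsupp.single (⟨0, by omega⟩ : Fin k) 1 : Fin k →₀ ℕ)
            (⟨0, by omega⟩ : Fin k)))
      - monomial (s - Finsupp.single (⟨1, by omega⟩ : Fin k) 1)
        (c * (s (⟨1, by omega⟩ : Fin k)) * (∑ i, (s i : ℝ))) := by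
  set i0 : Fin k := ⟨0, by omega⟩
  set i1 : Fin k := ⟨1, by omega⟩
  unfold Tm
  simp only [X_mul_pderiv_pderiv_monomial]
  simp only [pderiv_monomial, map_one, one_mul]
  rw [← map_sum (monomial (s - Finsupp.single i1 1))]
  rw [sub_sub, ← map_add (monomial (s - Finsupp.single i1 1))]
  congr 2
  exact coeff_id i1 c s

lemma multinomial_rec (i0 i1 : Fin k) (hne : i0 ≠ i1) (f g : Fin k → ℕ)
    (h0 : g i0 = f i0 + 2) (h1 : g i1 + 1 = f i1)
    (ho : ∀ i, i ≠ i0 → i ≠ i1 → g i = f i) :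
    (Nat.multinomial Finset.univ g : ℝ) * ((f i0 : ℝ) + 2) * ((f i0 : ℝ) + 1)
      = (Nat.multinomial Finset.univ f : ℝ) * (f i1 : ℝ) * (((∑ i, f i : ℕ) : ℝ) + 1) := by
  classical
  set S : ℕ := ∑ i, f i with hS
  set Pf : ℕ := ∏ i, Nat.factorial (f i) with hPf
  set Pg : ℕ := ∏ i, Nat.factorial (g i) with hPg
  have hQ : ∏ i ∈ (univ.erase i0).erase i1, Nat.factorial (g i)
      = ∏ i ∈ (univ.erase i0).erase i1, Nat.factorial (f i) :=
    Finset.prod_congr rfl fun i hi => by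
      rw [ho i (Finset.mem_erase.mp (Finset.mem_erase.mp hi).2).1 (Finset.mem_erase.mp hi).1]
  have htail : ∑ i ∈ (univ.erase i0).erase i1, g i = ∑ i ∈ (univ.erase i0).erase i1, f i :=
    Finset.sum_congr rfl fun i hi => ho i (Finset.mem_erase.mp (Finset.mem_erase.mp hi).2).1
      (Finset.mem_erase.mp hi).1
  have hsum : ∑ i, g i = S + 1 := by
    rw [hS, sum_split i0 i1 hne g, sum_split i0 i1 hne f, htail]
    omega
  have e1 : Pg * Nat.multinomial Finset.univ g = Nat.factorial (S + 1) := by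
    rw [hPg, Nat.multinomial_spec, hsum]
  have e2 : Pf * Nat.multinomial Finset.univ f = Nat.factorial S := by
    rw [hPf, Nat.multinomial_spec, hS]
  have key : Pg * (f i1) = Pf * ((f i0 + 1) * (f i0 + 2)) := by
    have hg0 : Nat.factorial (g i0) = (f i0 + 2) * ((f i0 + 1) * Nat.factorial (f i0)) := by
      rw [h0, Nat.factorial_succ, Nat.factorial_succ]
    have hf1 : Nat.factorial (f i1) = f i1 * Nat.factorial (g i1) := by
      rw [← h1, Nat.factorial_succ]
    rw [hPf, hPg, prod_split i0 i1 hne, prod_split i0 i1 hne (fun i => Nat.factorial (f i)),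
      hg0, hf1, hQ]
    ring
  have hPf0 : (Pf : ℝ) ≠ 0 :=
    Nat.cast_ne_zero.mpr (Finset.prod_pos fun i _ => Nat.factorial_pos _).ne'
  have hPg0 : (Pg : ℝ) ≠ 0 :=
    Nat.cast_ne_zero.mpr (Finset.prod_pos fun i _ => Nat.factorial_pos _).ne'
  have E1 : (Pg : ℝ) * (Nat.multinomial Finset.univ g : ℝ)
      = (Nat.factorial (S + 1) : ℝ) := by exact_mod_cast e1
  have E2 : (Pf : ℝ) * (Nat.multinomial Finset.univ f : ℝ)
      = (Nat.factorial S : ℝ) := by exact_mod_cast e2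
  have KEY : (Pg : ℝ) * (f i1 : ℝ)
      = (Pf : ℝ) * (((f i0 : ℝ) + 1) * ((f i0 : ℝ) + 2)) := by exact_mod_cast key
  have EF : (Nat.factorial (S + 1) : ℝ) = ((S : ℝ) + 1) * (Nat.factorial S : ℝ) := by
    rw [Nat.factorial_succ]; push_cast; ring
  apply mul_left_cancel₀ (mul_ne_zero hPf0 hPg0)
  linear_combination ((Pf : ℝ) * ((f i0 : ℝ) + 2) * ((f i0 : ℝ) + 1)) * E1
    - ((Pg : ℝ) * (f i1 : ℝ) * ((S : ℝ) + 1)) * E2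
    + ((Pf : ℝ) * ((f i0 : ℝ) + 2) * ((f i0 : ℝ) + 1)) * EF
    - (((S : ℝ) + 1) * (Nat.factorial S : ℝ)) * KEY

lemma telescope {M : Type*} [AddCommMonoid M] (F G : ℕ → M) (b : ℕ)
    (hF0 : F 0 = 0) (hGb : G b = 0) (h : ∀ j < b, F (j + 1) = G j) :
    ∑ j ∈ Finset.range (b + 1), F j = ∑ j ∈ Finset.range (b + 1), G j := by
  rw [Finset.sum_range_succ' F b, Finset.sum_range_succ G b, hF0, hGb, add_zero, add_zero]
  exact Finset.sum_congr rfl fun j hj => h j (Finset.mem_range.mp hj)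

/-- Every string belonging to a generalized Lucas polynomial (i.e. weighted by
the natural weight vector `ν`, `ν_i = i`) is annihilated by `T_1`. -/
theorem lucas_string_in_ker_T1 (k : ℕ) (hk : 2 ≤ k) (γ : Fin k → ℕ)
    (hγ : γ (⟨0, by omega⟩ : Fin k) = 0 ∨ γ (⟨0, by omega⟩ : Fin k) = 1) :
    Tm k hk 1 (strPoly k hk (fun i => (i.1 + 1 : ℝ)) γ) = 0 := by
  classical
  have hne : (⟨0, by omega⟩ : Fin k) ≠ (⟨1, by omega⟩ : Fin k) := by
    simp [Fin.ext_iff]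
  set i0 : Fin k := ⟨0, by omega⟩ with hi0
  set i1 : Fin k := ⟨1, by omega⟩ with hi1
  set ν : Fin k → ℝ := fun i => (i.1 + 1 : ℝ) with hν
  set b : ℕ := γ i1 with hb
  -- basic values of strElem
  have hE0 : ∀ j, strElem k hk γ j i0 = γ i0 + 2 * j := by
    intro j; simp [strElem, hi0, Fin.ext_iff]
  have hE1 : ∀ j, strElem k hk γ j i1 = γ i1 - j := by
    intro j; simp [strElem, hi1, Fin.ext_iff]
  have hEo : ∀ j i, i ≠ i0 → i ≠ i1 → strElem k hk γ j i = γ i := by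
    intro j i h0 h1
    simp only [hi0, hi1] at h0 h1
    simp [strElem, h0, h1]
  set N : ℕ := ∑ i, γ i with hN
  set n : ℕ := ∑ i, (i.1 + 1) * γ i with hn
  have hNb : b ≤ N := Finset.single_le_sum (fun i _ => Nat.zero_le _) (mem_univ i1)
  have htail : ∀ j, ∑ i ∈ (univ.erase i0).erase i1, strElem k hk γ j i
      = ∑ i ∈ (univ.erase i0).erase i1, γ i := fun j =>
    Finset.sum_congr rfl fun i hi => hEo j i
      (Finset.mem_erase.mp (Finset.mem_erase.mp hi).2).1 (Finset.mem_erase.mp hi).1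
  have htailw : ∀ j, ∑ i ∈ (univ.erase i0).erase i1, (i.1 + 1) * strElem k hk γ j i
      = ∑ i ∈ (univ.erase i0).erase i1, (i.1 + 1) * γ i := fun j =>
    Finset.sum_congr rfl fun i hi => by
      rw [hEo j i (Finset.mem_erase.mp (Finset.mem_erase.mp hi).2).1
        (Finset.mem_erase.mp hi).1]
  have hNn : ∀ j, j ≤ b → ∑ i, strElem k hk γ j i = N + j := by
    intro j hj
    rw [sum_split i0 i1 hne (strElem k hk γ j), htail j, hE0 j, hE1 j,
      hN, sum_split i0 i1 hne γ]
    omega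
  have hWn : ∀ j, j ≤ b → ∑ i, (i.1 + 1) * strElem k hk γ j i = n := by
    intro j hj
    have h0v : i0.1 = 0 := by simp [hi0]
    have h1v : i1.1 = 1 := by simp [hi1]
    rw [sum_split i0 i1 hne (fun i => (i.1 + 1) * strElem k hk γ j i), htailw j,
      hn, sum_split i0 i1 hne (fun i => (i.1 + 1) * γ i)]
    simp only [hE0 j, hE1 j, h0v, h1v]
    omega
  have hA : ∀ j, j ≤ b → Aw ν (strElem k hk γ j)
      = (Nat.multinomial Finset.univ (strElem k hk γ j) : ℝ) * (n : ℝ) / ((N : ℝ) + j) := by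
    intro j hj
    unfold Aw
    have c1 : ∑ i, (strElem k hk γ j i : ℝ) * ν i = (n : ℝ) := by
      rw [← hWn j hj]
      push_cast
      exact Finset.sum_congr rfl fun i _ => by rw [hν]; push_cast; ring
    have c2 : ∑ i, (strElem k hk γ j i : ℝ) = (N : ℝ) + j := by
      rw [show ((N : ℝ) + j) = ((N + j : ℕ) : ℝ) by push_cast; ring, ← hNn j hj]
      push_cast
      rfl
    rw [c1, c2, mul_div_assoc]
  -- main computation
  unfold strPoly
  rw [Tm_sum]
  simp only [Tm_monomial hk]
  rw [Finset.sum_sub_distrib, sub_eq_zero]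
  apply telescope
  · have hc : Aw ν (strElem k hk γ 0) *
        (((Finsupp.equivFunOnFinite.symm (strElem k hk γ 0)) i0 : ℕ) : ℝ) *
        ((((Finsupp.equivFunOnFinite.symm (strElem k hk γ 0)
            - Finsupp.single i0 1 : Fin k →₀ ℕ)) i0 : ℕ) : ℝ) = 0 := by
      rw [Finsupp.tsub_apply, Finsupp.single_apply, if_pos rfl, sExp_apply, hE0 0]
      rcases hγ with h | h <;> simp [h]
    show (MvPolynomial.monomial (Finsupp.equivFunOnFinite.symm (strElem k hk γ 0)
        - Finsupp.single i0 1 - Finsupp.single i0 1))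
      (Aw ν (strElem k hk γ 0) *
        (((Finsupp.equivFunOnFinite.symm (strElem k hk γ 0)) i0 : ℕ) : ℝ) *
        ((((Finsupp.equivFunOnFinite.symm (strElem k hk γ 0)
            - Finsupp.single i0 1 : Fin k →₀ ℕ)) i0 : ℕ) : ℝ)) = 0
    rw [hc, map_zero]
  · have hc2 : strElem k hk γ (γ i1) i1 = 0 := by rw [hE1]; omega
    show (MvPolynomial.monomial (Finsupp.equivFunOnFinite.symm (strElem k hk γ (γ i1))
        - Finsupp.single i1 1))
      (Aw ν (strElem k hk γ (γ i1)) *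
        (((Finsupp.equivFunOnFinite.symm (strElem k hk γ (γ i1))) i1 : ℕ) : ℝ) *
        (∑ i, (((Finsupp.equivFunOnFinite.symm (strElem k hk γ (γ i1))) i : ℕ) : ℝ))) = 0
    rw [sExp_apply, hc2]
    simp
  · intro j hj
    have hj' : j < b := hj
    have h0' : strElem k hk γ (j + 1) i0 = strElem k hk γ j i0 + 2 := by
      rw [hE0, hE0]; omega
    have h1' : strElem k hk γ (j + 1) i1 + 1 = strElem k hk γ j i1 := by
      rw [hE1, hE1]; omega
    have ho' : ∀ i, i ≠ i0 → i ≠ i1 → strElem k hk γ (j + 1) i = strElem k hk γ j i := by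
      intro i h0 h1; rw [hEo _ _ h0 h1, hEo _ _ h0 h1]
    have hexp : Finsupp.equivFunOnFinite.symm (strElem k hk γ (j + 1))
          - Finsupp.single i0 1 - Finsupp.single i0 1
        = Finsupp.equivFunOnFinite.symm (strElem k hk γ j) - Finsupp.single i1 1 := by
      ext i
      simp only [Finsupp.tsub_apply, Finsupp.single_apply, sExp_apply, strElem, hi0, hi1,
        Fin.ext_iff]
      split_ifs <;> omega
    have hrec := multinomial_rec i0 i1 hne (strElem k hk γ j) (strElem k hk γ (j + 1)) h0' h1' ho'
    rw [hE0 j, hE1 j, hNn j hj'.le] at hrec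
    show (MvPolynomial.monomial (Finsupp.equivFunOnFinite.symm (strElem k hk γ (j + 1))
        - Finsupp.single i0 1 - Finsupp.single i0 1))
      (Aw ν (strElem k hk γ (j + 1)) *
        (((Finsupp.equivFunOnFinite.symm (strElem k hk γ (j + 1))) i0 : ℕ) : ℝ) *
        ((((Finsupp.equivFunOnFinite.symm (strElem k hk γ (j + 1))
            - Finsupp.single i0 1 : Fin k →₀ ℕ)) i0 : ℕ) : ℝ))
      = (MvPolynomial.monomial (Finsupp.equivFunOnFinite.symm (strElem k hk γ j)
        - Finsupp.single i1 1))
      (Aw ν (strElem k hk γ j) *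
        (((Finsupp.equivFunOnFinite.symm (strElem k hk γ j)) i1 : ℕ) : ℝ) *
        (∑ i, (((Finsupp.equivFunOnFinite.symm (strElem k hk γ j)) i : ℕ) : ℝ)))
    rw [hexp]
    congr 1
    have v2 : ((Finsupp.equivFunOnFinite.symm (strElem k hk γ (j + 1))
        - Finsupp.single i0 1 : Fin k →₀ ℕ)) i0 = γ i0 + 2 * j + 1 := by
      rw [Finsupp.tsub_apply, Finsupp.single_apply, if_pos rfl, sExp_apply, hE0]; omega
    have v4 : (∑ i, (((Finsupp.equivFunOnFinite.symm (strElem k hk γ j)) i : ℕ) : ℝ))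
        = ((N : ℝ) + j) := by
      have e : (∑ i, (((Finsupp.equivFunOnFinite.symm (strElem k hk γ j)) i : ℕ) : ℝ))
          = ((∑ i, strElem k hk γ j i : ℕ) : ℝ) := by push_cast; rfl
      rw [e, hNn j hj'.le]; push_cast; ring
    rw [v2, v4, sExp_apply, sExp_apply, hE0 (j + 1), hE1 j,
      hA (j + 1) (by omega), hA j (by omega)]
    have hN1 : 1 ≤ N := le_trans (by omega) hNb
    have d1 : ((N : ℝ) + (j : ℝ)) ≠ 0 := by
      have e : ((N : ℝ) + (j : ℝ)) = ((N + j : ℕ) : ℝ) := by push_cast; ring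
      rw [e]; exact Nat.cast_ne_zero.mpr (by omega)
    have d2 : ((N : ℝ) + ((j : ℝ) + 1)) ≠ 0 := by
      have e : ((N : ℝ) + ((j : ℝ) + 1)) = ((N + j + 1 : ℕ) : ℝ) := by push_cast; ring
      rw [e]; exact Nat.cast_ne_zero.mpr (by omega)
    have hjb : j ≤ γ i1 := by omega
    push_cast [Nat.cast_sub hjb] at hrec ⊢
    field_simp
    linear_combination (n : ℝ) * hrec




end Aux
end

section
/- Let k ≥ 3, m : ℝ, and let ω : Fin k → ℝ be a weight vector with (ω₁, ω₂) ≠ (0, 0). If T_m(P_{n,ω}) = 0 for every n ≥ 1 (in particular for n = 2 and n = 3), then either m = 1 and 2ω₁ = ω₂, or m = 2 and ω₁ = ω₂. -/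
open MvPolynomial Finset

/-! The two lowest equations already decide everything. The relevant coefficients of the
weighted isobaric polynomials are `ω₁` (at `t₁²` and `t₁³`), `ω₂` (at `t₂`) and `ω₁ + ω₂`
(at `t₁t₂`), so the constant term of `T_m(P_{2,ω})` gives `2ω₁ = mω₂` and the `t₁`-coefficient
of `T_m(P_{3,ω})` gives `6ω₁ = (1 + m)(ω₁ + ω₂)`. Eliminating `ω₂` leaves
`ω₁(m - 1)(m - 2) = 0`, and `ω₁ = 0` would force `ω₂ = 0`. -/

lemma isoDeg_add {k : ℕ} (α β : Fin k → ℕ) : isoDeg (α + β) = isoDeg α + isoDeg β := by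
  simp only [isoDeg, Pi.add_apply, mul_add, sum_add_distrib]

lemma isoDeg_single {k : ℕ} (j : Fin k) (c : ℕ) : isoDeg (Pi.single j c) = (j.1 + 1) * c := by
  simp [isoDeg, Pi.single_apply]

lemma le_isoDeg {k : ℕ} (α : Fin k → ℕ) (i : Fin k) : α i ≤ isoDeg α :=
  calc α i ≤ (i.1 + 1) * α i := Nat.le_mul_of_pos_left _ i.1.succ_pos
    _ ≤ isoDeg α := single_le_sum (f := fun j : Fin k => (j.1 + 1) * α j)
      (fun _ _ => Nat.zero_le _) (mem_univ i)

lemma coeff_WIP {k : ℕ} (n : ℕ) (ω : Fin k → ℝ) (d : Fin k →₀ ℕ) :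
    coeff d (WIP k n ω) = if isoDeg ⇑d = n then Aw ω ⇑d else 0 := by
  have hmem : ⇑d ∈ wipIndex k n ↔ isoDeg ⇑d = n := by
    simp only [wipIndex, mem_filter, Fintype.mem_piFinset, mem_range, and_iff_right_iff_imp]
    rintro rfl i
    exact Nat.lt_succ_of_le (le_isoDeg _ i)
  simp only [WIP, coeff_sum, coeff_monomial, Equiv.symm_apply_eq]
  exact (sum_ite_eq' _ _ _).trans (if_congr hmem rfl rfl)

lemma Aw_single {k : ℕ} (ω : Fin k → ℝ) (j : Fin k) {c : ℕ} (hc : c ≠ 0) :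
    Aw ω (Pi.single j c) = ω j := by
  have hc' : (c : ℝ) ≠ 0 := Nat.cast_ne_zero.mpr hc
  simp only [Aw, Nat.multinomial_single, Pi.single_apply, Nat.cast_ite, Nat.cast_zero, ite_mul,
    zero_mul, sum_ite_eq', mem_univ, if_true, Nat.cast_one, one_mul]
  field_simp

lemma Aw_single_add_single {k : ℕ} (ω : Fin k → ℝ) {a b : Fin k} (hab : a ≠ b) :
    Aw ω (Pi.single a 1 + Pi.single b 1) = ω a + ω b := by
  have hsum : ∑ i, (Pi.single a 1 + Pi.single b 1 : Fin k → ℕ) i = 2 := by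
    simp [sum_add_distrib]
  have hprod : ∏ i, ((Pi.single a 1 + Pi.single b 1 : Fin k → ℕ) i).factorial = 1 := by
    refine prod_eq_one fun i _ => ?_
    by_cases ha : i = a <;> by_cases hb : i = b <;> simp_all [Pi.single_apply]
  have hmult : Nat.multinomial univ (Pi.single a 1 + Pi.single b 1 : Fin k → ℕ) = 2 := by
    have := Nat.multinomial_spec univ (Pi.single a 1 + Pi.single b 1 : Fin k → ℕ)
    rwa [hsum, hprod, one_mul] at this
  rw [Aw, hmult]
  simp only [Pi.add_apply, Pi.single_apply, Nat.cast_add, Nat.cast_ite, Nat.cast_one,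
    Nat.cast_zero, add_mul, ite_mul, one_mul, zero_mul, sum_add_distrib, sum_ite_eq', mem_univ,
    ↓reduceIte]
  ring

lemma coeff_single_WIP {k n : ℕ} (ω : Fin k → ℝ) (j : Fin k) {c : ℕ} (hc : c ≠ 0)
    (hn : (j.1 + 1) * c = n) : coeff (Finsupp.single j c) (WIP k n ω) = ω j := by
  rw [coeff_WIP, Finsupp.single_eq_pi_single, isoDeg_single, if_pos hn, Aw_single ω j hc]

lemma coeff_single_add_single_WIP {k n : ℕ} (ω : Fin k → ℝ) (a b : Fin k) (hab : a ≠ b)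
    (hn : a.1 + b.1 + 2 = n) :
    coeff (Finsupp.single a 1 + Finsupp.single b 1) (WIP k n ω) = ω a + ω b := by
  rw [coeff_WIP, Finsupp.coe_add, Finsupp.single_eq_pi_single, Finsupp.single_eq_pi_single,
    isoDeg_add, isoDeg_single, isoDeg_single, if_pos (by omega), Aw_single_add_single ω hab]

section Tm

variable {k : ℕ} (hk : 2 ≤ k) (m : ℝ) (P : MvPolynomial (Fin k) ℝ)

lemma coeff_zero_Tm :
    coeff 0 (Tm k hk m P) = 2 * coeff (Finsupp.single ⟨0, by omega⟩ 2) P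
      - m * coeff (Finsupp.single ⟨1, by omega⟩ 1) P := by
  have h2 : (Finsupp.single (⟨0, by omega⟩ : Fin k) 1 + Finsupp.single ⟨0, by omega⟩ 1) =
      Finsupp.single ⟨0, by omega⟩ 2 := by rw [← Finsupp.single_add]
  simp only [Tm, coeff_sub, coeff_C_mul, coeff_sum, coeff_X_mul', coeff_pderiv,
    Finsupp.support_zero, notMem_empty, if_false, sum_const_zero, zero_add, h2,
    Finsupp.single_eq_same, Finsupp.coe_zero, Pi.zero_apply, Nat.cast_zero, Nat.cast_one]
  ring

lemma coeff_single_zero_Tm :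
    coeff (Finsupp.single ⟨0, by omega⟩ 1) (Tm k hk m P) =
      6 * coeff (Finsupp.single ⟨0, by omega⟩ 3) P
      - (1 + m) * coeff (Finsupp.single ⟨0, by omega⟩ 1 + Finsupp.single ⟨1, by omega⟩ 1) P := by
  have h3 : (Finsupp.single (⟨0, by omega⟩ : Fin k) 1 + Finsupp.single ⟨0, by omega⟩ 1
      + Finsupp.single ⟨0, by omega⟩ 1) = Finsupp.single ⟨0, by omega⟩ 3 := by
    rw [← Finsupp.single_add, ← Finsupp.single_add]
  simp only [Tm, coeff_sub, coeff_C_mul, coeff_sum, coeff_X_mul', coeff_pderiv,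
    Finsupp.support_single, mem_singleton, sum_ite_eq', mem_univ, ↓reduceIte, tsub_self,
    Finsupp.coe_add, Pi.add_apply, Finsupp.single_eq_same, Finsupp.single_eq_of_ne, Fin.mk.injEq,
    ne_eq, one_ne_zero, zero_ne_one, not_false_eq_true, Finsupp.coe_zero, Pi.zero_apply, zero_add,
    add_zero, h3, add_comm (Finsupp.single (⟨1, by omega⟩ : Fin k) 1), Nat.cast_zero, Nat.cast_one]
  ring

end Tm

lemma weights_of_low_degree_equations {m a b : ℝ} (hab : ¬(a = 0 ∧ b = 0))
    (h2 : 2 * a - m * b = 0) (h3 : 6 * a - (1 + m) * (a + b) = 0) :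
    (m = 1 ∧ 2 * a = b) ∨ (m = 2 ∧ a = b) := by
  have key : a * ((m - 1) * (m - 2)) = 0 := by linear_combination (1 + m) * h2 - m * h3
  rcases mul_eq_zero.1 key with ha | hm
  · exact absurd ⟨ha, by linear_combination h2 - h3 - (m - 3) * ha⟩ hab
  rcases mul_eq_zero.1 hm with hm | hm
  · obtain rfl : m = 1 := by linarith
    exact .inl ⟨rfl, by linarith⟩
  · obtain rfl : m = 2 := by linarith
    exact .inr ⟨rfl, by linarith⟩

/-- Proposition 4.1: if the whole weighted sequence `P_{n,ω}` (with `(ω₁,ω₂) ≠ (0,0)`)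
is annihilated by `T_m`, then `m = 1` and `2ω₁ = ω₂`, or `m = 2` and `ω₁ = ω₂`. -/
theorem weight_dichotomy (k : ℕ) (hk : 3 ≤ k) (m : ℝ) (ω : Fin k → ℝ)
    (hω : ¬(ω (⟨0, by omega⟩ : Fin k) = 0 ∧ ω (⟨1, by omega⟩ : Fin k) = 0))
    (h : ∀ n, 1 ≤ n → Tm k (by omega) m (WIP k n ω) = 0) :
    (m = 1 ∧ 2 * ω (⟨0, by omega⟩ : Fin k) = ω (⟨1, by omega⟩ : Fin k)) ∨
      (m = 2 ∧ ω (⟨0, by omega⟩ : Fin k) = ω (⟨1, by omega⟩ : Fin k)) := by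
  have h2 := congrArg (coeff 0) (h 2 (by norm_num))
  rw [coeff_zero_Tm, coeff_single_WIP (n := 2) ω ⟨0, by omega⟩ two_ne_zero rfl,
    coeff_single_WIP (n := 2) ω ⟨1, by omega⟩ one_ne_zero rfl, coeff_zero] at h2
  have h3 := congrArg (coeff (Finsupp.single ⟨0, by omega⟩ 1)) (h 3 (by norm_num))
  rw [coeff_single_zero_Tm, coeff_single_WIP (n := 3) ω ⟨0, by omega⟩ three_ne_zero rfl,
    coeff_single_add_single_WIP (n := 3) ω ⟨0, by omega⟩ ⟨1, by omega⟩ (by simp) rfl,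
    coeff_zero] at h3
  exact weights_of_low_degree_equations hω h2 h3
end

section
/- Let k ≥ 2, m : ℝ, and P ∈ MvPolynomial (Fin k) ℝ. Then every exponent vector β in the support of T_m(P) satisfies β ≤ α componentwise for some exponent vector α in the support of P; that is, the image T_m(P) lies in the union of the differential lattices of the monomials of P. (Lemma 4.4.) -/
open MvPolynomial Finset

lemma mem_support_pderiv_add {k : ℕ} (i : Fin k) (Q : MvPolynomial (Fin k) ℝ)
    {β : (Fin k) →₀ ℕ} (hβ : β ∈ (MvPolynomial.pderiv i Q).support) :
    β + Finsupp.single i 1 ∈ Q.support := by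
  classical
  rw [MvPolynomial.mem_support_iff] at hβ
  conv at hβ => rw [Q.as_sum, map_sum]
  rw [MvPolynomial.coeff_sum] at hβ
  obtain ⟨α, hα, hne⟩ := Finset.exists_ne_zero_of_sum_ne_zero hβ
  rw [MvPolynomial.pderiv_monomial, MvPolynomial.coeff_monomial] at hne
  by_cases h : α - Finsupp.single i 1 = β
  · have hi : 1 ≤ α i := by
      by_contra hc
      have : α i = 0 := by omega
      simp [h, this] at hne
    have : β + Finsupp.single i 1 = α := by
      ext j
      have : α j - Finsupp.single i 1 j = β j := by rw [← h]; simp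
      by_cases hji : j = i
      · subst hji; simp [← this]; omega
      · have hij : ¬ i = j := fun h => hji h.symm
        simp [Finsupp.single_apply, hij, ← this]
    rwa [this]
  · simp [h] at hne

/-- Lemma 4.4: the image `T_m(P)` lies in the union of the differential lattices of
the monomials of `P`: every exponent vector of `T_m(P)` is dominated componentwise
by an exponent vector of `P`. -/
theorem image_in_differential_lattice (k : ℕ) (hk : 2 ≤ k) (m : ℝ)
    (P : MvPolynomial (Fin k) ℝ) :
    ∀ β ∈ (Tm k hk m P).support, ∃ α ∈ P.support, ∀ i, β i ≤ α i := by
  classical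
  intro β hβ
  rw [MvPolynomial.mem_support_iff, Tm] at hβ
  simp only [MvPolynomial.coeff_sub] at hβ
  have h3 : MvPolynomial.coeff β (MvPolynomial.pderiv (⟨0, by omega⟩ : Fin k)
      (MvPolynomial.pderiv (⟨0, by omega⟩ : Fin k) P)) ≠ 0 ∨
      MvPolynomial.coeff β (∑ j : Fin k, MvPolynomial.X j *
        MvPolynomial.pderiv (⟨1, by omega⟩ : Fin k) (MvPolynomial.pderiv j P)) ≠ 0 ∨
      MvPolynomial.coeff β (MvPolynomial.C m *
        MvPolynomial.pderiv (⟨1, by omega⟩ : Fin k) P) ≠ 0 := by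
    by_contra h
    push_neg at h
    rw [h.1, h.2.1, h.2.2] at hβ
    simp at hβ
  rcases h3 with h | h | h
  · have h1 := mem_support_pderiv_add _ _ (MvPolynomial.mem_support_iff.2 h)
    have h2 := mem_support_pderiv_add _ _ h1
    exact ⟨_, h2, fun i => by simp [Finsupp.add_apply]; omega⟩
  · rw [MvPolynomial.coeff_sum] at h
    obtain ⟨j, _, hne⟩ := Finset.exists_ne_zero_of_sum_ne_zero h
    have hmem : β ∈ (MvPolynomial.X j *
        MvPolynomial.pderiv (⟨1, by omega⟩ : Fin k) (MvPolynomial.pderiv j P)).support :=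
      MvPolynomial.mem_support_iff.2 hne
    rw [MvPolynomial.support_X_mul, Finset.mem_map] at hmem
    obtain ⟨β', hβ', hβeq⟩ := hmem
    have h1 := mem_support_pderiv_add _ _ hβ'
    have h2 := mem_support_pderiv_add _ _ h1
    refine ⟨_, h2, fun i => ?_⟩
    have : β = Finsupp.single j 1 + β' := by rw [← hβeq]; rfl
    rw [this]
    simp only [Finsupp.add_apply]
    omega
  · rw [MvPolynomial.coeff_C_mul] at h
    have h0 : MvPolynomial.coeff β (MvPolynomial.pderiv (⟨1, by omega⟩ : Fin k) P) ≠ 0 :=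
      fun hz => h (by rw [hz, mul_zero])
    exact ⟨_, mem_support_pderiv_add _ _ (MvPolynomial.mem_support_iff.2 h0),
      fun i => by simp [Finsupp.add_apply]⟩
end
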